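/- (Failure of sub-additivity for faithful asymmetry measures, explicit witness) Let U_B(g) be a unitary representation of a finite group G on H_B, and take the trivial representation on H_A = ℂ^{|G|} with orthonormal basis {|g⟩}. Let ρ_B be a state with U_B(g₀) ρ_B U_B(g₀)† ≠ ρ_B for some g₀ ∈ G, and define σ_{AB} = (1/|G|) Σ_{g∈G} |g⟩⟨g| ⊗ U_B(g) ρ_B U_B(g)†. Then: (a) σ_{AB} is asymmetric, i.e., there exists g with (I_A ⊗ U_B(g)) σ_{AB} (I_A ⊗ U_B(g))† ≠ σ_{AB}; (b) the marginal σ_B = (1/|G|) Σ_g U_B(g) ρ_B U_B(g)† satisfies U_B(h) σ_B U_B(h)† = σ_B for all h ∈ G; (c) the marginal σ_A = I_A/|G| is invariant under the trivial representation. -/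

import Mathlib

open Matrix Kronecker
open scoped ComplexOrder

/-- Time evolution unitary `e^{-iHt}`. -/
noncomputable def timeEvo {ι : Type} [Fintype ι] [DecidableEq ι]
    (H : Matrix ι ι ℂ) (t : ℝ) : Matrix ι ι ℂ :=
  NormedSpace.exp ((-(Complex.I * (t : ℂ))) • H)

/-- Conjugation `U M U†`. -/
noncomputable def uconj {ι : Type} [Fintype ι] (U M : Matrix ι ι ℂ) : Matrix ι ι ℂ :=
  U * M * Uᴴ

/-- A density operator: positive semidefinite with unit trace. -/
noncomputable def IsState {ι : Type} [Fintype ι] (ρ : Matrix ι ι ℂ) : Prop :=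
  ρ.PosSemidef ∧ ρ.trace = 1

/-- Choi matrix of a linear map. -/
noncomputable def choi {ι κ : Type} [Fintype ι] [DecidableEq ι] [Fintype κ]
    (E : Matrix ι ι ℂ →ₗ[ℂ] Matrix κ κ ℂ) : Matrix (ι × κ) (ι × κ) ℂ :=
  fun p q => E (Matrix.single p.1 q.1 1) p.2 q.2

/-- A quantum channel: completely positive (positive semidefinite Choi matrix)
and trace preserving. -/
noncomputable def IsCPTP {ι κ : Type} [Fintype ι] [DecidableEq ι] [Fintype κ]
    (E : Matrix ι ι ℂ →ₗ[ℂ] Matrix κ κ ℂ) : Prop :=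
  (choi E).PosSemidef ∧ ∀ M : Matrix ι ι ℂ, (E M).trace = M.trace

/-- Partial trace over the second (right) tensor factor. -/
noncomputable def ptraceRight {ι κ : Type} [Fintype ι] [Fintype κ]
    (M : Matrix (ι × κ) (ι × κ) ℂ) : Matrix ι ι ℂ :=
  fun i j => ∑ k, M (i, k) (j, k)

/-- Partial trace over the first (left) tensor factor. -/
noncomputable def ptraceLeft {ι κ : Type} [Fintype ι] [Fintype κ]
    (M : Matrix (ι × κ) (ι × κ) ℂ) : Matrix κ κ ℂ :=
  fun i j => ∑ k, M (k, i) (k, j)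

/-- Positive semidefinite square root, extended by `0` to non-PSD matrices. -/
noncomputable def msqrt {ι : Type} [Fintype ι] [DecidableEq ι]
    (M : Matrix ι ι ℂ) : Matrix ι ι ℂ :=
  @dite _ M.PosSemidef (Classical.propDecidable _) (fun h => (h.1.eigenvectorUnitary : Matrix ι ι ℂ) *
    diagonal (fun i => ((Real.sqrt (h.1.eigenvalues i) : ℝ) : ℂ)) *
    (star h.1.eigenvectorUnitary : Matrix ι ι ℂ)) (fun _ => 0)

/-- Trace norm `‖M‖₁ = Tr √(M†M)`. -/
noncomputable def traceNorm {ι : Type} [Fintype ι] [DecidableEq ι]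
    (M : Matrix ι ι ℂ) : ℝ :=
  (msqrt (Mᴴ * M)).trace.re

/-- Uhlmann fidelity `Fid(σ,τ) = ‖√σ√τ‖₁`. -/
noncomputable def Fid {ι : Type} [Fintype ι] [DecidableEq ι]
    (σ τ : Matrix ι ι ℂ) : ℝ :=
  traceNorm (msqrt σ * msqrt τ)

/-- Rank-one projector `|v⟩⟨v|` of a vector. -/
noncomputable def proj {ι : Type} (v : ι → ℂ) : Matrix ι ι ℂ :=
  Matrix.vecMulVec v (star v)

/-- The asymmetry monotone `f_t(ρ) = 1 - Fid(ρ, e^{-iHt} ρ e^{iHt})`. -/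
noncomputable def ft {ι : Type} [Fintype ι] [DecidableEq ι]
    (H : Matrix ι ι ℂ) (t : ℝ) (ρ : Matrix ι ι ℂ) : ℝ :=
  1 - Fid ρ (uconj (timeEvo H t) ρ)


section Aux

open Matrix Kronecker

private lemma kron_conjT {m n : Type} [Fintype m] [Fintype n]
    (A : Matrix m m ℂ) (B : Matrix n n ℂ) : (A ⊗ₖ B)ᴴ = Aᴴ ⊗ₖ Bᴴ := by
  ext ⟨i, j⟩ ⟨k, l⟩
  simp [Matrix.conjTranspose_apply, Matrix.kroneckerMap_apply]

private lemma ptraceLeft_kron {m n : Type} [Fintype m] [Fintype n]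
    (A : Matrix m m ℂ) (B : Matrix n n ℂ) :
    ptraceLeft (A ⊗ₖ B) = A.trace • B := by
  ext i j
  simp [ptraceLeft, Matrix.kroneckerMap_apply, Matrix.trace, Finset.sum_mul]

private lemma ptraceRight_kron {m n : Type} [Fintype m] [Fintype n]
    (A : Matrix m m ℂ) (B : Matrix n n ℂ) :
    ptraceRight (A ⊗ₖ B) = B.trace • A := by
  ext i j
  simp [ptraceRight, Matrix.kroneckerMap_apply, Matrix.trace, Finset.mul_sum, mul_comm]

private lemma ptraceLeft_smul {m n : Type} [Fintype m] [Fintype n]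
    (c : ℂ) (M : Matrix (m × n) (m × n) ℂ) :
    ptraceLeft (c • M) = c • ptraceLeft M := by
  ext i j; simp [ptraceLeft, Finset.mul_sum]

private lemma ptraceRight_smul {m n : Type} [Fintype m] [Fintype n]
    (c : ℂ) (M : Matrix (m × n) (m × n) ℂ) :
    ptraceRight (c • M) = c • ptraceRight M := by
  ext i j; simp [ptraceRight, Finset.mul_sum]

private lemma ptraceLeft_sum {m n ι : Type} [Fintype m] [Fintype n] [Fintype ι]
    (f : ι → Matrix (m × n) (m × n) ℂ) :
    ptraceLeft (∑ i, f i) = ∑ i, ptraceLeft (f i) := by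
  ext i j; simp only [ptraceLeft, Matrix.sum_apply]
  exact Finset.sum_comm

private lemma ptraceRight_sum {m n ι : Type} [Fintype m] [Fintype n] [Fintype ι]
    (f : ι → Matrix (m × n) (m × n) ℂ) :
    ptraceRight (∑ i, f i) = ∑ i, ptraceRight (f i) := by
  ext i j; simp only [ptraceRight, Matrix.sum_apply]
  exact Finset.sum_comm

private lemma uconj_smul {m : Type} [Fintype m] (A : Matrix m m ℂ) (c : ℂ)
    (M : Matrix m m ℂ) : uconj A (c • M) = c • uconj A M := by
  simp [uconj, Matrix.mul_smul, Matrix.smul_mul]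

private lemma uconj_sum {m ι : Type} [Fintype m] [Fintype ι] (A : Matrix m m ℂ)
    (f : ι → Matrix m m ℂ) : uconj A (∑ i, f i) = ∑ i, uconj A (f i) := by
  simp [uconj, Finset.mul_sum, Finset.sum_mul]

private lemma uconj_uconj {m : Type} [Fintype m] (A B M : Matrix m m ℂ) :
    uconj A (uconj B M) = uconj (A * B) M := by
  simp [uconj, Matrix.conjTranspose_mul, Matrix.mul_assoc]

private lemma sum_stdBasis_diag {G : Type} [Fintype G] [DecidableEq G] :
    ∑ g : G, Matrix.single g g (1 : ℂ) = 1 := by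
  ext i j
  simp [Matrix.single, Matrix.sum_apply, Matrix.one_apply, ite_and]

end Aux

/-- Explicit witness of the failure of sub-additivity: the classical-quantum state
`σ_{AB} = (1/|G|) Σ_g |g⟩⟨g| ⊗ U(g) ρ_B U(g)†` is asymmetric while both marginals
are symmetric. -/
theorem subadditivity_failure_witness
    {G : Type} [Group G] [Fintype G] [DecidableEq G]
    {B : Type} [Fintype B] [DecidableEq B]
    (U : G → Matrix B B ℂ)
    (hUunitary : ∀ g, (U g)ᴴ * U g = 1)
    (hUhom : ∀ g h, U (g * h) = U g * U h)
    (ρB : Matrix B B ℂ) (hρB : IsState ρB)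
    (hasym : ∃ g₀ : G, uconj (U g₀) ρB ≠ ρB)
    (σAB : Matrix (G × B) (G × B) ℂ)
    (hσAB : σAB = ((Fintype.card G : ℂ))⁻¹ •
      ∑ g : G, Matrix.single g g (1 : ℂ) ⊗ₖ uconj (U g) ρB) :
    (∃ g : G, uconj ((1 : Matrix G G ℂ) ⊗ₖ U g) σAB ≠ σAB) ∧
    (ptraceLeft σAB = ((Fintype.card G : ℂ))⁻¹ • ∑ g : G, uconj (U g) ρB ∧
      ∀ h : G, uconj (U h) (ptraceLeft σAB) = ptraceLeft σAB) ∧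
    (ptraceRight σAB = ((Fintype.card G : ℂ))⁻¹ • (1 : Matrix G G ℂ)) := by
  obtain ⟨g₀, hg₀⟩ := hasym
  have hcard : (Fintype.card G : ℂ) ≠ 0 := Nat.cast_ne_zero.mpr Fintype.card_ne_zero
  have hc : ((Fintype.card G : ℂ))⁻¹ ≠ 0 := inv_ne_zero hcard
  have hUone : U 1 = 1 := by
    have h1 : U 1 * U 1 = U 1 := by rw [← hUhom]; simp
    have := congrArg (fun M => (U 1)ᴴ * M) h1
    simpa [← Matrix.mul_assoc, hUunitary 1] using this
  have htr : ∀ g, (uconj (U g) ρB).trace = 1 := by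
    intro g
    rw [uconj, Matrix.trace_mul_comm, ← Matrix.mul_assoc, hUunitary g, Matrix.one_mul, hρB.2]
  have hB : ptraceLeft σAB = ((Fintype.card G : ℂ))⁻¹ • ∑ g : G, uconj (U g) ρB := by
    rw [hσAB, ptraceLeft_smul, ptraceLeft_sum]
    congr 1
    refine Finset.sum_congr rfl fun g _ => ?_
    simp [ptraceLeft_kron]
  refine ⟨⟨g₀, ?_⟩, ⟨hB, ?_⟩, ?_⟩
  · intro hcontra
    have hL : uconj ((1 : Matrix G G ℂ) ⊗ₖ U g₀) σAB
        = ((Fintype.card G : ℂ))⁻¹ • ∑ g : G,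
          Matrix.single g g (1 : ℂ) ⊗ₖ uconj (U (g₀ * g)) ρB := by
      rw [hσAB, uconj_smul, uconj_sum]
      congr 1
      refine Finset.sum_congr rfl fun g _ => ?_
      rw [uconj, kron_conjT, ← Matrix.mul_kronecker_mul, ← Matrix.mul_kronecker_mul,
        Matrix.conjTranspose_one, Matrix.one_mul, Matrix.mul_one, hUhom]
      simp [uconj, Matrix.conjTranspose_mul, Matrix.mul_assoc]
    rw [hL, hσAB] at hcontra
    apply hg₀
    ext i j
    have h2 := Matrix.ext_iff.mpr hcontra ((1 : G), i) ((1 : G), j)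
    simp only [Matrix.smul_apply, Matrix.sum_apply, Matrix.kroneckerMap_apply,
      Matrix.single, Matrix.of_apply, smul_eq_mul, ite_and] at h2
    simp only [Finset.sum_ite_eq', Finset.mem_univ, if_true, ite_mul, one_mul,
      zero_mul] at h2
    have h3 := mul_left_cancel₀ hc h2
    simpa [hUone, uconj] using h3
  · intro h
    rw [hB, uconj_smul, uconj_sum]
    congr 1
    simp only [uconj_uconj, ← hUhom]
    exact Fintype.sum_equiv (Equiv.mulLeft h) _ _ fun g => rfl
  · rw [hσAB, ptraceRight_smul, ptraceRight_sum]
    congr 1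
    calc ∑ g : G, ptraceRight (Matrix.single g g (1:ℂ) ⊗ₖ uconj (U g) ρB)
        = ∑ g : G, Matrix.single g g (1:ℂ) := by
          refine Finset.sum_congr rfl fun g _ => ?_
          rw [ptraceRight_kron, htr, one_smul]
      _ = 1 := sum_stdBasis_diag
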